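/- arXiv:2205.08392 — 2 statements merged into one kernel-verified Lean document; each statement's English description precedes it below -/
import Mathlib

section
/- If n ≥ 1 and σ(x^{2n}) = 1 + x + ... + x^{2n} is irreducible over F_2 and is of the form 1 + x^a(x+1)^b (a Mersenne prime), then 2n ∈ {2, 4}. -/
open Polynomial Finset

/-!
Write `σ(x ^ 2n) = 1 + x τ` with `τ = σ(x ^ (2n - 1))`. Since `τ(0) = 1`, the Mersenne form
forces `a = 1` and `(x + 1) ^ b = τ`, so `(x + 1) ^ (b + 1) = x ^ 2n + 1` and `b + 1 = 2n`. In
characteristic 2 this identity only holds when `2n = 2 ^ k` (strip the Frobenius and compare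
linear coefficients). Then `2n + 1 = 2 ^ k + 1` divides `2 ^ 2k - 1`, so the irreducible
`σ(x ^ 2n)` divides `x ^ (2 ^ 2k) - x` and its degree `2 ^ k` divides `2k`, leaving `k ∈ {1, 2}`.
-/

theorem Nat.le_two_of_two_pow_dvd_two_mul {k : ℕ} (h : 2 ^ k ∣ 2 * k) : k ≤ 2 := by
  by_contra! hk
  obtain ⟨j, rfl⟩ : ∃ j, k = j + 3 := ⟨k - 3, by omega⟩
  have hle := Nat.le_of_dvd (by omega) h
  have hj := j.lt_two_pow_self
  rw [pow_add] at hle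
  omega

theorem geom_sum_dvd_pow_mul_add_one_sub_self {R : Type*} [CommRing R] (x : R) (m j : ℕ) :
    ∑ i ∈ range m, x ^ i ∣ x ^ (m * j + 1) - x := by
  have hsub : ∑ i ∈ range m, x ^ i ∣ x ^ m - 1 := Dvd.intro _ (geom_sum_mul x m)
  have hpow : x ^ m - 1 ∣ x ^ (m * j) - 1 := by
    simpa [pow_mul] using sub_dvd_pow_sub_pow (x ^ m) 1 j
  have hx : x ^ (m * j + 1) - x = x * (x ^ (m * j) - 1) := by ring
  exact hx ▸ (hsub.trans hpow).mul_left x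

namespace Polynomial

variable {R : Type*}

theorem natDegree_geom_sum_X [Ring R] [Nontrivial R] (m : ℕ) :
    (∑ i ∈ range (m + 1), (X : R[X]) ^ i).natDegree = m := by
  have h := congrArg natDegree (geom_sum_mul (X : R[X]) (m + 1))
  rw [← C_1, (monic_geom_sum_X m.add_one_ne_zero).natDegree_mul (monic_X_sub_C 1),
    natDegree_X_sub_C, natDegree_X_pow_sub_C] at h
  omega

theorem exists_eq_pow_of_X_add_one_pow_eq [CommRing R] [IsDomain R] (p : ℕ) [hp : Fact p.Prime]
    [CharP R p] {m : ℕ} (hm : m ≠ 0) (h : (X + 1 : R[X]) ^ m = X ^ m + 1) :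
    ∃ k, m = p ^ k := by
  obtain ⟨e, m', hpm', rfl⟩ := Nat.exists_eq_pow_mul_and_not_dvd hm p hp.out.ne_one
  have hodd : (X + 1 : R[X]) ^ m' = X ^ m' + 1 := by
    apply iterateFrobenius_inj R[X] p e
    simpa only [iterateFrobenius_def, ← pow_mul, mul_comm, add_pow_char_pow, one_pow] using h
  have hcoeff := congrArg (coeff · 1) hodd
  simp only [coeff_X_add_one_pow, Nat.choose_one_right, coeff_add, coeff_X_pow, coeff_one]
    at hcoeff
  obtain rfl : m' = 1 := by
    by_contra hm'
    rw [if_neg (Ne.symm hm'), if_neg one_ne_zero, add_zero, CharP.cast_eq_zero_iff R p] at hcoeff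
    exact hpm' hcoeff
  exact ⟨e, mul_one _⟩

theorem X_add_one_pow_eq_of_geom_sum_eq_one_add [CommRing R] [IsDomain R] [CharP R 2] {m a b : ℕ}
    (hm : m ≠ 0) (ha : 1 ≤ a)
    (h : ∑ i ∈ range (m + 1), (X : R[X]) ^ i = 1 + X ^ a * (X + 1) ^ b) :
    (X + 1 : R[X]) ^ m = X ^ m + 1 := by
  set τ := ∑ i ∈ range m, (X : R[X]) ^ i
  have hτ : X ^ a * (X + 1) ^ b = X * τ := by
    rw [geom_sum_succ] at h
    linear_combination -h
  have hτ0 : τ.coeff 0 = 1 := by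
    simp [τ, coeff_X_pow, Nat.pos_of_ne_zero hm]
  obtain rfl : a = 1 := by
    by_contra ha1
    have h1 := congrArg (coeff · (0 + 1)) hτ
    simp only [coeff_X_pow_mul', if_neg (show ¬a ≤ 0 + 1 by omega), coeff_X_mul, hτ0] at h1
    exact zero_ne_one h1
  have hb : (X + 1 : R[X]) ^ (b + 1) = X ^ m + 1 := by
    rw [pow_one] at hτ
    rw [pow_succ, mul_left_cancel₀ X_ne_zero hτ, ← CharTwo.sub_eq_add, ← CharTwo.sub_eq_add,
      geom_sum_mul]
  have hdeg : b + 1 = m := by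
    have := congrArg natDegree hb
    rwa [← C_1, natDegree_pow_X_add_C, natDegree_X_pow_add_C] at this
  rwa [← hdeg] at hb ⊢

end Polynomial

theorem sigma_x_pow_mersenne (n : ℕ) (hn : 1 ≤ n)
    (hirr : Irreducible (∑ i ∈ Finset.range (2 * n + 1), (X : Polynomial (ZMod 2)) ^ i))
    (hM : ∃ a b : ℕ, 1 ≤ a ∧ 1 ≤ b ∧ Nat.gcd a b = 1 ∧
      (∑ i ∈ Finset.range (2 * n + 1), (X : Polynomial (ZMod 2)) ^ i) =
        1 + X ^ a * (X + 1) ^ b) :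
    2 * n = 2 ∨ 2 * n = 4 := by
  obtain ⟨a, b, ha, -, -, hσ⟩ := hM
  obtain ⟨k, hk⟩ := exists_eq_pow_of_X_add_one_pow_eq 2 (by omega)
    (X_add_one_pow_eq_of_geom_sum_eq_one_add (by omega) ha hσ)
  have hexp : 2 ^ (2 * k) = (2 * n + 1) * (2 ^ k - 1) + 1 := by
    obtain ⟨m, hm⟩ : ∃ m, 2 * n = m + 1 := ⟨2 * n - 1, by omega⟩
    rw [pow_mul', ← hk, hm, Nat.add_sub_cancel]
    ring
  have hdvd := hirr.natDegree_dvd_of_dvd_X_pow_card_pow_sub_X (n := 2 * k) <| by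
    rw [Nat.card_zmod, hexp]
    exact geom_sum_dvd_pow_mul_add_one_sub_self X _ _
  rw [natDegree_geom_sum_X, hk] at hdvd
  have hk2 := Nat.le_two_of_two_pow_dvd_two_mul hdvd
  interval_cases k <;> omega
end

section
/- For any m, n ∈ ℕ* and any Mersenne prime polynomial P over F_2, σ(P^{2m}) ≠ σ(x^{2n}) and σ(P^{2m}) ≠ σ((x+1)^{2n}). -/
open Polynomial

/-!
If `σ(P^{2m}) = σ(Q^{2n})` with `deg Q = 1`, comparing degrees gives `2m · deg P = 2n`. Compare
the coefficients of `x^{2n-1}`. On the right it is `1`: it comes from `Q^{2n-1}`, while the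
contribution `2n` of `Q^{2n}` vanishes in characteristic `2`. On the left, `P^{2m}` is a square
and so has no odd coefficients, and the lower powers have degree at most
`(2m - 1) deg P < 2n - 1` because `deg P ≥ 2`.
-/

variable {R : Type*}

theorem natDegree_sum_range_pow_le [Semiring R] (Q : R[X]) (N : ℕ) :
    (∑ i ∈ Finset.range N, Q ^ i).natDegree ≤ (N - 1) * Q.natDegree :=
  natDegree_sum_le_of_forall_le _ _ fun i hi =>
    natDegree_pow_le.trans <| Nat.mul_le_mul_right _ <| by
      simp only [Finset.mem_range] at hi; omega

theorem natDegree_sum_range_succ_pow [Semiring R] [NoZeroDivisors R] {Q : R[X]}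
    (hQ : 0 < Q.natDegree) (N : ℕ) :
    (∑ i ∈ Finset.range (N + 1), Q ^ i).natDegree = N * Q.natDegree := by
  rcases N.eq_zero_or_pos with rfl | hN
  · simp
  have hlow : (∑ i ∈ Finset.range N, Q ^ i).natDegree < (Q ^ N).natDegree := by
    rw [natDegree_pow]
    exact (natDegree_sum_range_pow_le Q N).trans_lt <|
      Nat.mul_lt_mul_of_pos_right (by omega) hQ
  rw [Finset.sum_range_succ, natDegree_add_eq_right_of_natDegree_lt hlow, natDegree_pow]

theorem coeff_sq_of_not_dvd [CommSemiring R] [CharP R 2] (f : R[X]) {k : ℕ}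
    (hk : ¬ 2 ∣ k) : (f ^ 2).coeff k = 0 := by
  rw [← map_frobenius_expand, coeff_map, coeff_expand two_pos, if_neg hk, map_zero]

theorem coeff_sum_range_pow_two_mul [CommSemiring R] [CharP R 2] {P : R[X]}
    (hP : 2 ≤ P.natDegree) {m : ℕ} (hm : 0 < m) :
    (∑ i ∈ Finset.range (2 * m + 1), P ^ i).coeff (2 * m * P.natDegree - 1) = 0 := by
  have hlow : (∑ i ∈ Finset.range (2 * m), P ^ i).natDegree < 2 * m * P.natDegree - 1 := by
    refine (natDegree_sum_range_pow_le P _).trans_lt ?_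
    rw [Nat.sub_mul, one_mul]
    have : P.natDegree ≤ 2 * m * P.natDegree := Nat.le_mul_of_pos_left _ (by omega)
    omega
  have hodd : ¬ 2 ∣ 2 * m * P.natDegree - 1 := by
    have : 0 < m * P.natDegree := by positivity
    rw [mul_assoc]
    omega
  rw [Finset.sum_range_succ, coeff_add, coeff_eq_zero_of_natDegree_lt hlow, pow_mul',
    coeff_sq_of_not_dvd _ hodd, add_zero]

theorem coeff_sum_range_X_add_C_pow_two_mul [CommSemiring R] [CharP R 2] (c : R)
    {n : ℕ} (hn : 0 < n) :
    (∑ i ∈ Finset.range (2 * n + 1), (X + C c) ^ i).coeff (2 * n - 1) = 1 := by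
  have hlow : (∑ i ∈ Finset.range (2 * n - 1), (X + C c) ^ i).natDegree < 2 * n - 1 :=
    (natDegree_sum_range_pow_le _ _).trans_lt <| by
      have : (X + C c).natDegree ≤ 1 := (natDegree_add_le _ _).trans (by simp [natDegree_X_le])
      calc (2 * n - 1 - 1) * (X + C c).natDegree ≤ (2 * n - 1 - 1) * 1 := by gcongr
        _ < 2 * n - 1 := by omega
  have htop : ((X + C c) ^ (2 * n)).coeff (2 * n - 1) = 0 := by
    rw [coeff_X_add_C_pow, Nat.choose_symm_of_eq_add (show 2 * n = 2 * n - 1 + 1 by omega),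
      Nat.choose_one_right, Nat.cast_mul, CharP.cast_eq_zero, zero_mul, mul_zero]
  rw [show 2 * n + 1 = 2 * n - 1 + 1 + 1 by omega, Finset.sum_range_succ, Finset.sum_range_succ,
    coeff_add, coeff_add, coeff_eq_zero_of_natDegree_lt hlow, show 2 * n - 1 + 1 = 2 * n by omega,
    htop, coeff_X_add_C_pow, Nat.sub_self, pow_zero, Nat.choose_self]
  simp

theorem sum_range_pow_ne_sum_range_X_add_C_pow [CommRing R] [IsDomain R] [CharP R 2]
    {P : R[X]} (hP : 2 ≤ P.natDegree) {m n : ℕ} (hm : 0 < m) (hn : 0 < n) (c : R) :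
    ∑ i ∈ Finset.range (2 * m + 1), P ^ i ≠
      ∑ i ∈ Finset.range (2 * n + 1), (X + C c) ^ i := by
  intro h
  have hdeg : 2 * m * P.natDegree = 2 * n := by
    simpa [natDegree_sum_range_succ_pow (two_pos.trans_le hP),
      natDegree_sum_range_succ_pow (by simp : 0 < (X + C c).natDegree)] using
      congrArg natDegree h
  have hcoeff := coeff_sum_range_pow_two_mul hP hm
  rw [h, hdeg, coeff_sum_range_X_add_C_pow_two_mul c hn] at hcoeff
  exact one_ne_zero hcoeff

theorem natDegree_one_add_X_pow_mul_X_add_one_pow [Semiring R] [Nontrivial R] {a b : ℕ}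
    (h : a + b ≠ 0) : (1 + X ^ a * (X + 1) ^ b : R[X]).natDegree = a + b := by
  have hmonic : IsMonicOfDegree (X ^ a * (X + C 1) ^ b : R[X]) (a + 1 * b) :=
    (isMonicOfDegree_X_pow R a).mul ((isMonicOfDegree_X_add_one (1 : R)).pow b)
  simpa using (hmonic.add_left (p := 1) (by rw [natDegree_one]; omega)).natDegree_eq

theorem sigma_mersenne_pow_ne_general (m n : ℕ) (hm : 1 ≤ m) (hn : 1 ≤ n)
    (P : Polynomial (ZMod 2))
    (hM : ∃ a b : ℕ, 1 ≤ a ∧ 1 ≤ b ∧ P = 1 + X ^ a * (X + 1) ^ b) :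
    (∑ i ∈ Finset.range (2 * m + 1), P ^ i) ≠
      (∑ i ∈ Finset.range (2 * n + 1), (X : Polynomial (ZMod 2)) ^ i) ∧
    (∑ i ∈ Finset.range (2 * m + 1), P ^ i) ≠
      (∑ i ∈ Finset.range (2 * n + 1), ((X : Polynomial (ZMod 2)) + 1) ^ i) := by
  obtain ⟨a, b, ha, hb, rfl⟩ := hM
  have hP : 2 ≤ (1 + X ^ a * (X + 1) ^ b : (ZMod 2)[X]).natDegree := by
    rw [natDegree_one_add_X_pow_mul_X_add_one_pow (by omega)]
    omega
  constructor
  · simpa using sum_range_pow_ne_sum_range_X_add_C_pow hP hm hn 0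
  · simpa using sum_range_pow_ne_sum_range_X_add_C_pow hP hm hn 1

theorem sigma_mersenne_pow_ne (m n : ℕ) (hm : 1 ≤ m) (hn : 1 ≤ n)
    (P : Polynomial (ZMod 2)) (hirr : Irreducible P)
    (hM : ∃ a b : ℕ, 1 ≤ a ∧ 1 ≤ b ∧ P = 1 + X ^ a * (X + 1) ^ b) :
    (∑ i ∈ Finset.range (2 * m + 1), P ^ i) ≠
      (∑ i ∈ Finset.range (2 * n + 1), (X : Polynomial (ZMod 2)) ^ i) ∧
    (∑ i ∈ Finset.range (2 * m + 1), P ^ i) ≠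
      (∑ i ∈ Finset.range (2 * n + 1), ((X : Polynomial (ZMod 2)) + 1) ^ i) :=
  sigma_mersenne_pow_ne_general m n hm hn P hM
end
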